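/- arXiv:2103.16402 — 4 statements merged into one kernel-verified Lean document; each statement's English description precedes it below -/
import Mathlib

section
/- Let y : [0,∞) → ℝ be differentiable and suppose that y'(λ) ≤ -y(λ)²/2 for every λ ≥ 0. Then y(λ) ≥ 0 for every λ ≥ 0. -/
/-!
If `y l < 0`, the inequality `y' ≤ -y²/2` makes `y` nonincreasing, so `y` stays negative on
`[l, ∞)`, and there `(1/y)' = -y'/y² ≥ 1/2`. Hence `1/y(t) ≥ 1/y(l) + (t - l)/2`, which is `≥ 0`
at `t = l - 2/y(l)`: a negative number that is nonnegative. This is the finite-time blow-up of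
the Riccati equation `y' = -y²/2`.
-/

open Set

theorem Convex.monotoneOn_of_hasDerivWithinAt_nonneg {D : Set ℝ} (hD : Convex ℝ D)
    {f f' : ℝ → ℝ} (hf : ∀ x ∈ D, HasDerivWithinAt f (f' x) D x) (hf'₀ : ∀ x ∈ D, 0 ≤ f' x) :
    MonotoneOn f D :=
  _root_.monotoneOn_of_hasDerivWithinAt_nonneg hD (fun x hx ↦ (hf x hx).continuousWithinAt)
    (fun x hx ↦ (hf x (interior_subset hx)).mono interior_subset)
    (fun x hx ↦ hf'₀ x (interior_subset hx))

theorem Convex.antitoneOn_of_hasDerivWithinAt_nonpos {D : Set ℝ} (hD : Convex ℝ D)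
    {f f' : ℝ → ℝ} (hf : ∀ x ∈ D, HasDerivWithinAt f (f' x) D x) (hf'₀ : ∀ x ∈ D, f' x ≤ 0) :
    AntitoneOn f D :=
  _root_.antitoneOn_of_hasDerivWithinAt_nonpos hD (fun x hx ↦ (hf x hx).continuousWithinAt)
    (fun x hx ↦ (hf x (interior_subset hx)).mono interior_subset)
    (fun x hx ↦ hf'₀ x (interior_subset hx))

section Riccati

variable {y y' : ℝ → ℝ} {a : ℝ}

theorem antitoneOn_Ici_of_deriv_le_neg_sq_div_two
    (hderiv : ∀ t ∈ Ici a, HasDerivWithinAt y (y' t) (Ici a) t)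
    (hineq : ∀ t ∈ Ici a, y' t ≤ -(y t) ^ 2 / 2) :
    AntitoneOn y (Ici a) :=
  (convex_Ici a).antitoneOn_of_hasDerivWithinAt_nonpos hderiv fun t ht ↦
    (hineq t ht).trans (by nlinarith [sq_nonneg (y t)])

theorem monotoneOn_Ici_inv_sub_half_of_deriv_le_neg_sq_div_two
    (hderiv : ∀ t ∈ Ici a, HasDerivWithinAt y (y' t) (Ici a) t)
    (hineq : ∀ t ∈ Ici a, y' t ≤ -(y t) ^ 2 / 2) (hneg : ∀ t ∈ Ici a, y t < 0) :
    MonotoneOn (fun t ↦ (y t)⁻¹ - t / 2) (Ici a) := by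
  refine (convex_Ici a).monotoneOn_of_hasDerivWithinAt_nonneg
    (f' := fun t ↦ -y' t / y t ^ 2 - 1 / 2)
    (fun t ht ↦ ((hderiv t ht).inv (hneg t ht).ne).sub
      ((hasDerivWithinAt_id t _).div_const 2)) fun t ht ↦ ?_
  have hy2 : 0 < y t ^ 2 := by nlinarith [hneg t ht]
  have : 1 / 2 ≤ -y' t / y t ^ 2 := (le_div_iff₀ hy2).mpr (by linarith [hineq t ht])
  linarith

theorem nonneg_of_deriv_le_neg_sq_div_two
    (hderiv : ∀ t ∈ Ici a, HasDerivWithinAt y (y' t) (Ici a) t)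
    (hineq : ∀ t ∈ Ici a, y' t ≤ -(y t) ^ 2 / 2) :
    0 ≤ y a := by
  by_contra! hya
  have hneg : ∀ t ∈ Ici a, y t < 0 := fun t ht ↦
    (antitoneOn_Ici_of_deriv_le_neg_sq_div_two hderiv hineq self_mem_Ici ht ht).trans_lt hya
  set T := a - 2 * (y a)⁻¹ with hT
  have haT : a ≤ T := by linarith [inv_lt_zero.mpr hya]
  have hmono : (y a)⁻¹ - a / 2 ≤ (y T)⁻¹ - T / 2 :=
    monotoneOn_Ici_inv_sub_half_of_deriv_le_neg_sq_div_two hderiv hineq hneg self_mem_Ici haT haT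
  linarith [inv_lt_zero.mpr (hneg T haT)]

end Riccati

/-- Scalar Raychaudhuri comparison: if `y` is differentiable on `[0,∞)` and
satisfies `y' ≤ -y²/2` there, then `y ≥ 0` on `[0,∞)`. -/
theorem stmt_0 (y y' : ℝ → ℝ)
    (hderiv : ∀ l ∈ Set.Ici (0 : ℝ), HasDerivWithinAt y (y' l) (Set.Ici 0) l)
    (hineq : ∀ l ∈ Set.Ici (0 : ℝ), y' l ≤ -(y l) ^ 2 / 2) :
    ∀ l ∈ Set.Ici (0 : ℝ), 0 ≤ y l := by
  intro l hl
  have hsub : Ici l ⊆ Ici (0 : ℝ) := Ici_subset_Ici.mpr hl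
  exact nonneg_of_deriv_le_neg_sq_div_two (fun t ht ↦ (hderiv t (hsub ht)).mono hsub)
    fun t ht ↦ hineq t (hsub ht)
end

section
/- Let Λ ∈ (0,∞]. Suppose β, v : [0,Λ) → ℝ are differentiable and g, h, α : [0,Λ) → ℝ are functions such that for every λ ∈ [0,Λ): β(λ) > 0, h(λ) ≥ 0, α(λ) ≥ 0, 0 < v(λ) < 1, the Raychaudhuri equation β' = -β² - ½h² - ½g holds, the energy condition g ≥ (5/2)h² + 4βh + 2α holds, and v' = β(1-v)². Then for every λ ∈ [0,Λ): (β²/v²)·((v/β)' - v² + v - 1) ≥ (7/4)h² + α + |2β/v - β|·h. -/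
/-!
Expanding `(v/β)'` with the quotient rule and inserting `v' = β(1-v)²` and the Raychaudhuri
equation, every `β²` term cancels and the left-hand side collapses to `(h² + g)/(2v)`. The energy
condition bounds this below by `(7/4 h² + α)/v + 2βh/v`, and `0 < v < 1` finishes the estimate.
-/

/-- The domain `[0,Λ)` for `Λ ∈ (0,∞]`, viewed as a subset of `ℝ`. -/
def genDom (Λ : EReal) : Set ℝ := {x : ℝ | 0 ≤ x ∧ (x : EReal) < Λ}

lemma Ico_subset_genDom {Λ : EReal} {l c : ℝ} (hl : l ∈ genDom Λ) (hc : (c : EReal) < Λ) :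
    Set.Ico l c ⊆ genDom Λ :=
  fun _ hx => ⟨hl.1.trans hx.1, (EReal.coe_lt_coe_iff.2 hx.2).trans hc⟩

lemma uniqueDiffWithinAt_genDom {Λ : EReal} {l : ℝ} (hl : l ∈ genDom Λ) :
    UniqueDiffWithinAt ℝ (genDom Λ) l := by
  obtain ⟨c, hlc, hcΛ⟩ := EReal.exists_between_coe_real hl.2
  exact (uniqueDiffOn_Ico l c l ⟨le_rfl, EReal.coe_lt_coe_iff.1 hlc⟩).mono
    (Ico_subset_genDom hl hcΛ)

lemma gauge_expr_eq {b v h g b' v' q' : ℝ} (hb : b ≠ 0) (hv : v ≠ 0)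
    (hq : q' = (v' * b - v * b') / b ^ 2) (hray : b' = -b ^ 2 - h ^ 2 / 2 - g / 2)
    (hvode : v' = b * (1 - v) ^ 2) :
    b ^ 2 / v ^ 2 * (q' - v ^ 2 + v - 1) = (h ^ 2 + g) / (2 * v) := by
  subst hq hray hvode
  field_simp
  ring

lemma gauge_bound {b v h a g : ℝ} (hb : 0 < b) (hv0 : 0 < v) (hv1 : v < 1) (hh : 0 ≤ h)
    (ha : 0 ≤ a) (henergy : 5 / 2 * h ^ 2 + 4 * b * h + 2 * a ≤ g) :
    7 / 4 * h ^ 2 + a + |2 * b / v - b| * h ≤ (h ^ 2 + g) / (2 * v) := by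
  have hbv : b ≤ 2 * b / v := by
    rw [le_div_iff₀ hv0]
    nlinarith
  have hmain : 7 / 4 * h ^ 2 + a ≤ (7 / 4 * h ^ 2 + a) / v :=
    le_div_self (by positivity) hv0 hv1.le
  rw [abs_of_nonneg (sub_nonneg.2 hbv)]
  calc 7 / 4 * h ^ 2 + a + (2 * b / v - b) * h
      ≤ (7 / 4 * h ^ 2 + a) / v + 2 * b / v * h := by nlinarith [mul_nonneg hb.le hh]
    _ = (7 / 2 * h ^ 2 + 4 * b * h + 2 * a) / (2 * v) := by field_simp; ring
    _ ≤ (h ^ 2 + g) / (2 * v) := div_le_div_of_nonneg_right (by linarith) (by positivity)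

theorem stmt_5_general (Λ : EReal) (β v g h α β' v' q' : ℝ → ℝ)
    (hβpos : ∀ l ∈ genDom Λ, 0 < β l)
    (hh : ∀ l ∈ genDom Λ, 0 ≤ h l)
    (hα : ∀ l ∈ genDom Λ, 0 ≤ α l)
    (hv01 : ∀ l ∈ genDom Λ, 0 < v l ∧ v l < 1)
    (hβderiv : ∀ l ∈ genDom Λ, HasDerivWithinAt β (β' l) (genDom Λ) l)
    (hray : ∀ l ∈ genDom Λ, β' l = -(β l) ^ 2 - (h l) ^ 2 / 2 - g l / 2)
    (henergy : ∀ l ∈ genDom Λ,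
      (5 / 2 : ℝ) * (h l) ^ 2 + 4 * β l * h l + 2 * α l ≤ g l)
    (hvderiv : ∀ l ∈ genDom Λ, HasDerivWithinAt v (v' l) (genDom Λ) l)
    (hvode : ∀ l ∈ genDom Λ, v' l = β l * (1 - v l) ^ 2)
    (hq : ∀ l ∈ genDom Λ, HasDerivWithinAt (fun x => v x / β x) (q' l) (genDom Λ) l) :
    ∀ l ∈ genDom Λ,
      (7 / 4 : ℝ) * (h l) ^ 2 + α l + |2 * β l / v l - β l| * h l ≤
        (β l) ^ 2 / (v l) ^ 2 * (q' l - (v l) ^ 2 + v l - 1) := by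
  intro l hl
  obtain ⟨hv0, hv1⟩ := hv01 l hl
  have hq' : q' l = (v' l * β l - v l * β' l) / β l ^ 2 :=
    (uniqueDiffWithinAt_genDom hl).eq_deriv _ (hq l hl)
      ((hvderiv l hl).div (hβderiv l hl) (hβpos l hl).ne')
  rw [gauge_expr_eq (hβpos l hl).ne' hv0.ne' hq' (hray l hl) (hvode l hl)]
  exact gauge_bound (hβpos l hl) hv0 hv1 (hh l hl) (hα l hl) (henergy l hl)

/-- Scalar form of the gauge inequality in the proof of Theorem 1.2: with
`β = ½ tr K > 0`, `h = |K̂| ≥ 0`, `α = |α̂| ≥ 0`, `g = G(k,k)`, the Raychaudhuri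
equation `β' = -β² - ½h² - ½g`, the energy condition `g ≥ (5/2)h² + 4βh + 2α`,
`0 < v < 1` and `v' = β(1-v)²`, one has
`(β²/v²)·((v/β)' - v² + v - 1) ≥ (7/4)h² + α + |2β/v - β|·h` on `[0,Λ)`. -/
theorem stmt_5 (Λ : EReal) (hΛ : 0 < Λ) (β v g h α β' v' q' : ℝ → ℝ)
    (hβpos : ∀ l ∈ genDom Λ, 0 < β l)
    (hh : ∀ l ∈ genDom Λ, 0 ≤ h l)
    (hα : ∀ l ∈ genDom Λ, 0 ≤ α l)
    (hv01 : ∀ l ∈ genDom Λ, 0 < v l ∧ v l < 1)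
    (hβderiv : ∀ l ∈ genDom Λ, HasDerivWithinAt β (β' l) (genDom Λ) l)
    (hray : ∀ l ∈ genDom Λ, β' l = -(β l) ^ 2 - (h l) ^ 2 / 2 - g l / 2)
    (henergy : ∀ l ∈ genDom Λ,
      (5 / 2 : ℝ) * (h l) ^ 2 + 4 * β l * h l + 2 * α l ≤ g l)
    (hvderiv : ∀ l ∈ genDom Λ, HasDerivWithinAt v (v' l) (genDom Λ) l)
    (hvode : ∀ l ∈ genDom Λ, v' l = β l * (1 - v l) ^ 2)
    (hq : ∀ l ∈ genDom Λ, HasDerivWithinAt (fun x => v x / β x) (q' l) (genDom Λ) l) :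
    ∀ l ∈ genDom Λ,
      (7 / 4 : ℝ) * (h l) ^ 2 + α l + |2 * β l / v l - β l| * h l ≤
        (β l) ^ 2 / (v l) ^ 2 * (q' l - (v l) ^ 2 + v l - 1) :=
  stmt_5_general Λ β v g h α β' v' q' hβpos hh hα hv01 hβderiv hray henergy hvderiv hvode hq
end

section
/- Let Λ ∈ (0,∞]. Suppose β, v : [0,Λ) → ℝ are differentiable and g, h, α : [0,Λ) → ℝ are functions such that for every λ ∈ [0,Λ): β(λ) > 0, h(λ) ≥ 0, α(λ) ≥ 0, 0 < v(λ) < 1, the Raychaudhuri equation β' = -β² - ½h² - ½g holds, the energy condition g ≥ (5/2)h² + 4βh + 2α holds, and v' = β(1-v)². Define a(λ) = exp(∫₀^λ β(u)/v(u) du). Then a is twice differentiable with a' = aβ/v, a(λ) ≥ 1 for every λ, and for every λ ∈ [0,Λ): a²g - a·(2a' - 2aβ)' ≥ |4a' - 2aβ|·a·h + (5/2)·a²h² + 2a²α. -/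
/-!
With `a' = aβ/v`, the Raychaudhuri equation and `v' = β(1 - v)²` make the `β²` terms cancel in
`(2a' - 2aβ)' = -a(1 - v)(h² + g)/v`. Multiplied by `v/a²`, the gauge inequality becomes
`g + (1 - v)h² ≥ 2β(2 - v)h + (5/2)vh² + 2vα`, and its excess over the energy condition is
`(7/2)(1 - v)h² + 2βvh + 2(1 - v)α ≥ 0`.
-/

open MeasureTheory

open Filter Set Topology

theorem Set.OrdConnected.hasDerivWithinAt_integral {E : Type*} [NormedAddCommGroup E]
    [NormedSpace ℝ E] [CompleteSpace E] {s : Set ℝ} (hs : s.OrdConnected) {f : ℝ → E} {a x : ℝ}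
    (hf : ContinuousOn f s) (ha : a ∈ s) (hx : x ∈ s) :
    HasDerivWithinAt (fun u => ∫ t in a..u, f t) (f x) s x := by
  have : intervalIntegral.FTCFilter x (𝓝[s] x) (𝓝[s] x) :=
    { toTendstoIxxClass := tendstoIxxClass_of_subset fun _ _ => Ioc_subset_Icc_self
      pure_le := pure_le_nhdsWithin hx
      le_nhds := inf_le_left
      meas_gen := hs.measurableSet.nhdsWithin_isMeasurablyGenerated x }
  exact intervalIntegral.integral_hasDerivWithinAt_right
    ((hf.mono (hs.uIcc_subset ha hx)).intervalIntegrable)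
    (hf.stronglyMeasurableAtFilter_nhdsWithin hs.measurableSet x) (hf x hx)

theorem genDom_ordConnected (Λ : EReal) : (genDom Λ).OrdConnected :=
  ⟨fun _ hx _ hy _ hz =>
    ⟨hx.1.trans hz.1, (EReal.coe_le_coe_iff.mpr hz.2).trans_lt hy.2⟩⟩

theorem zero_mem_genDom {Λ : EReal} {l : ℝ} (hl : l ∈ genDom Λ) : (0 : ℝ) ∈ genDom Λ :=
  ⟨le_rfl, (EReal.coe_le_coe_iff.mpr hl.1).trans_lt hl.2⟩

theorem hasDerivWithinAt_gauge {a β v : ℝ → ℝ} {β' v' g h x : ℝ} {s : Set ℝ}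
    (ha : HasDerivWithinAt a (a x * β x / v x) s x) (hβ : HasDerivWithinAt β β' s x)
    (hv : HasDerivWithinAt v v' s x) (hv0 : v x ≠ 0)
    (hray : β' = -(β x) ^ 2 - h ^ 2 / 2 - g / 2) (hvode : v' = β x * (1 - v x) ^ 2) :
    HasDerivWithinAt (fun y => 2 * (a y * β y / v y) - 2 * a y * β y)
      (-(a x * (1 - v x) * (h ^ 2 + g) / v x)) s x := by
  refine ((((ha.mul hβ).div hv hv0).const_mul 2).sub ((ha.const_mul 2).mul hβ)).congr_deriv ?_
  rw [hray, hvode, Pi.mul_apply]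
  field_simp
  ring

theorem gauge_inequality {a β v g h α : ℝ} (ha : 0 ≤ a) (hβ : 0 ≤ β) (hh : 0 ≤ h)
    (hα : 0 ≤ α) (hv0 : 0 < v) (hv1 : v ≤ 1)
    (henergy : 5 / 2 * h ^ 2 + 4 * β * h + 2 * α ≤ g) :
    |4 * (a * β / v) - 2 * a * β| * a * h + 5 / 2 * a ^ 2 * h ^ 2 + 2 * a ^ 2 * α ≤
      a ^ 2 * g - a * -(a * (1 - v) * (h ^ 2 + g) / v) := by
  have habs : 4 * (a * β / v) - 2 * a * β = 2 * a * β * (2 - v) / v := by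
    field_simp
    ring
  have hexcess : 0 ≤ g + (1 - v) * h ^ 2 - 2 * β * (2 - v) * h - 5 / 2 * v * h ^ 2 - 2 * v * α := by
    nlinarith [mul_nonneg (sub_nonneg.mpr hv1) (sq_nonneg h), mul_nonneg (mul_nonneg hβ hv0.le) hh,
      mul_nonneg (sub_nonneg.mpr hv1) hα]
  have hpos : 0 ≤ 2 * a * β * (2 - v) / v :=
    div_nonneg (mul_nonneg (by positivity) (by linarith)) hv0.le
  rw [habs, abs_of_nonneg hpos, ← sub_nonneg]
  have hdiff : a ^ 2 * g - a * -(a * (1 - v) * (h ^ 2 + g) / v) -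
      (2 * a * β * (2 - v) / v * a * h + 5 / 2 * a ^ 2 * h ^ 2 + 2 * a ^ 2 * α) =
      a ^ 2 * (g + (1 - v) * h ^ 2 - 2 * β * (2 - v) * h - 5 / 2 * v * h ^ 2 - 2 * v * α) / v := by
    field_simp
    ring
  rw [hdiff]
  exact div_nonneg (mul_nonneg (sq_nonneg a) hexcess) hv0.le

theorem stmt_6_general (Λ : EReal) (β v g h α : ℝ → ℝ) (β' v' : ℝ → ℝ)
    (hβpos : ∀ l ∈ genDom Λ, 0 < β l)
    (hh : ∀ l ∈ genDom Λ, 0 ≤ h l)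
    (hα : ∀ l ∈ genDom Λ, 0 ≤ α l)
    (hv01 : ∀ l ∈ genDom Λ, 0 < v l ∧ v l < 1)
    (hβderiv : ∀ l ∈ genDom Λ, HasDerivWithinAt β (β' l) (genDom Λ) l)
    (hray : ∀ l ∈ genDom Λ, β' l = -(β l) ^ 2 - (h l) ^ 2 / 2 - g l / 2)
    (henergy : ∀ l ∈ genDom Λ,
      (5 / 2 : ℝ) * (h l) ^ 2 + 4 * β l * h l + 2 * α l ≤ g l)
    (hvderiv : ∀ l ∈ genDom Λ, HasDerivWithinAt v (v' l) (genDom Λ) l)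
    (hvode : ∀ l ∈ genDom Λ, v' l = β l * (1 - v l) ^ 2)
    (a : ℝ → ℝ)
    (ha : ∀ l : ℝ, a l = Real.exp (∫ u in (0 : ℝ)..l, β u / v u)) :
    ∀ l ∈ genDom Λ,
      HasDerivWithinAt a (a l * β l / v l) (genDom Λ) l ∧
      1 ≤ a l ∧
      ∃ D : ℝ,
        HasDerivWithinAt (fun x => 2 * (a x * β x / v x) - 2 * a x * β x) D
          (genDom Λ) l ∧
        |4 * (a l * β l / v l) - 2 * a l * β l| * a l * h l +
            (5 / 2 : ℝ) * (a l) ^ 2 * (h l) ^ 2 + 2 * (a l) ^ 2 * α l ≤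
          (a l) ^ 2 * g l - a l * D := by
  intro l hl
  have hs := genDom_ordConnected Λ
  have hcont : ContinuousOn (fun u => β u / v u) (genDom Λ) :=
    ContinuousOn.div (fun x hx => (hβderiv x hx).continuousWithinAt)
      (fun x hx => (hvderiv x hx).continuousWithinAt) fun x hx => (hv01 x hx).1.ne'
  have haderiv : HasDerivWithinAt a (a l * β l / v l) (genDom Λ) l := by
    convert (hs.hasDerivWithinAt_integral hcont (zero_mem_genDom hl) hl).exp using 1
    · exact funext ha
    · rw [ha l, mul_div_assoc]
  have ha1 : 1 ≤ a l := by
    rw [ha l]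
    refine Real.one_le_exp (intervalIntegral.integral_nonneg hl.1 fun u hu => ?_)
    have hu : u ∈ genDom Λ := hs.out (zero_mem_genDom hl) hl hu
    exact div_nonneg (hβpos u hu).le (hv01 u hu).1.le
  refine ⟨haderiv, ha1, _,
    hasDerivWithinAt_gauge haderiv (hβderiv l hl) (hvderiv l hl) (hv01 l hl).1.ne'
      (hray l hl) (hvode l hl),
    gauge_inequality (zero_le_one.trans ha1) (hβpos l hl).le (hh l hl) (hα l hl)
      (hv01 l hl).1 (hv01 l hl).2.le (henergy l hl)⟩

/-- Scalar form of the gauge construction in the proof of Theorem 1.2: with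
`β = ½ tr K > 0`, `h = |K̂| ≥ 0`, `α = |α̂| ≥ 0`, `g = G(k,k)`, the Raychaudhuri
equation `β' = -β² - ½h² - ½g`, the energy condition `g ≥ (5/2)h² + 4βh + 2α`,
`0 < v < 1` and `v' = β(1-v)²`, the function `a(λ) = exp(∫₀^λ β/v)` satisfies
`a' = aβ/v`, `a ≥ 1`, is twice differentiable, and
`a²g - a·(2a' - 2aβ)' ≥ |4a' - 2aβ|·a·h + (5/2)a²h² + 2a²α` on `[0,Λ)`. -/
theorem stmt_6 (Λ : EReal) (hΛ : 0 < Λ) (β v g h α : ℝ → ℝ) (β' v' : ℝ → ℝ)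
    (hβpos : ∀ l ∈ genDom Λ, 0 < β l)
    (hh : ∀ l ∈ genDom Λ, 0 ≤ h l)
    (hα : ∀ l ∈ genDom Λ, 0 ≤ α l)
    (hv01 : ∀ l ∈ genDom Λ, 0 < v l ∧ v l < 1)
    (hβderiv : ∀ l ∈ genDom Λ, HasDerivWithinAt β (β' l) (genDom Λ) l)
    (hray : ∀ l ∈ genDom Λ, β' l = -(β l) ^ 2 - (h l) ^ 2 / 2 - g l / 2)
    (henergy : ∀ l ∈ genDom Λ,
      (5 / 2 : ℝ) * (h l) ^ 2 + 4 * β l * h l + 2 * α l ≤ g l)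
    (hvderiv : ∀ l ∈ genDom Λ, HasDerivWithinAt v (v' l) (genDom Λ) l)
    (hvode : ∀ l ∈ genDom Λ, v' l = β l * (1 - v l) ^ 2)
    (a : ℝ → ℝ)
    (ha : ∀ l : ℝ, a l = Real.exp (∫ u in (0 : ℝ)..l, β u / v u)) :
    ∀ l ∈ genDom Λ,
      HasDerivWithinAt a (a l * β l / v l) (genDom Λ) l ∧
      1 ≤ a l ∧
      ∃ D : ℝ,
        HasDerivWithinAt (fun x => 2 * (a x * β x / v x) - 2 * a x * β x) D
          (genDom Λ) l ∧
        |4 * (a l * β l / v l) - 2 * a l * β l| * a l * h l +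
            (5 / 2 : ℝ) * (a l) ^ 2 * (h l) ^ 2 + 2 * (a l) ^ 2 * α l ≤
          (a l) ^ 2 * g l - a l * D :=
  stmt_6_general Λ β v g h α β' v' hβpos hh hα hv01 hβderiv hray henergy hvderiv hvode a ha
end

section
/- Let S and h be real symmetric 2×2 matrices with tr h = 0, and let w ∈ ℝ². Then -(tr S)·⟨w, h·w⟩ - ‖S‖² - |w|²·tr(h·S) ≤ ½·⟨w, h·w⟩² + ¼·|w|⁴·‖h‖², where ‖·‖ is the Frobenius norm, ⟨·,·⟩ the Euclidean inner product and |·| the Euclidean norm on ℝ². -/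
/-!
Write `q = ⟨w, h w⟩`, `u = ½|w|²` and `Ŝ` for the traceless part of `S`. In dimension two
`‖S‖² = ‖Ŝ‖² + ½ (tr S)²`, and since `tr h = 0` and `S` is symmetric, `tr(h S) = ⟨Ŝ, h⟩`.
Hence the right-hand side minus the left-hand side is `½ (q + tr S)² + ‖Ŝ + u h‖² ≥ 0`;
the first square closes only because the weight of `(tr S)²` in `‖S‖²` is `1/2 = 1/dim`.
-/

open Matrix

namespace Matrix

variable {n : Type*} [Fintype n] [DecidableEq n]

noncomputable def tracelessPart (S : Matrix n n ℝ) : Matrix n n ℝ :=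
  S - (S.trace / Fintype.card n) • 1

theorem trace_tracelessPart [Nonempty n] (S : Matrix n n ℝ) : S.tracelessPart.trace = 0 := by
  simp [tracelessPart, trace_sub, trace_smul, trace_one]

theorem sum_sub_smul_one_mul (A B : Matrix n n ℝ) (c : ℝ) :
    ∑ i, ∑ j, (A - c • 1) i j * B i j = ∑ i, ∑ j, A i j * B i j - c * B.trace := by
  simp [sub_mul, one_apply, ite_mul, trace, Finset.mul_sum]

theorem sum_sq_eq_sum_sq_tracelessPart_add [Nonempty n] (S : Matrix n n ℝ) :
    ∑ i, ∑ j, S i j ^ 2 =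
      ∑ i, ∑ j, S.tracelessPart i j ^ 2 + S.trace ^ 2 / Fintype.card n := by
  have hsq := sum_sub_smul_one_mul S S.tracelessPart (S.trace / Fintype.card n)
  have hcross := sum_sub_smul_one_mul S S (S.trace / Fintype.card n)
  rw [← tracelessPart, trace_tracelessPart] at hsq
  rw [← tracelessPart] at hcross
  simp only [sq, mul_comm (S _ _) (S.tracelessPart _ _)] at hsq ⊢
  rw [hsq, hcross]
  ring

theorem sum_tracelessPart_mul_of_trace_eq_zero (S : Matrix n n ℝ) {h : Matrix n n ℝ}
    (htr : h.trace = 0) :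
    ∑ i, ∑ j, S.tracelessPart i j * h i j = ∑ i, ∑ j, S i j * h i j := by
  rw [tracelessPart, sum_sub_smul_one_mul, htr, mul_zero, sub_zero]

omit [DecidableEq n] in
theorem trace_mul_eq_sum_mul_of_isSymm {S : Matrix n n ℝ} (hS : S.IsSymm) (h : Matrix n n ℝ) :
    (h * S).trace = ∑ i, ∑ j, S i j * h i j := by
  simp only [trace, diag_apply, mul_apply, hS.apply, mul_comm]

end Matrix

theorem sum_sq_add_two_mul_sum_mul_add_sq_nonneg {ι κ : Type*} [Fintype ι] [Fintype κ]
    (a b : ι → κ → ℝ) (u : ℝ) :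
    0 ≤ ∑ i, ∑ j, a i j ^ 2 + 2 * u * ∑ i, ∑ j, a i j * b i j + u ^ 2 * ∑ i, ∑ j, b i j ^ 2 := by
  have hexp : ∑ i, ∑ j, (a i j + u * b i j) ^ 2 =
      ∑ i, ∑ j, a i j ^ 2 + 2 * u * ∑ i, ∑ j, a i j * b i j + u ^ 2 * ∑ i, ∑ j, b i j ^ 2 := by
    simp only [Finset.mul_sum, ← Finset.sum_add_distrib]
    exact Finset.sum_congr rfl fun i _ ↦ Finset.sum_congr rfl fun j _ ↦ by ring
  rw [← hexp]
  positivity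

theorem stmt_10_general (S h : Matrix (Fin 2) (Fin 2) ℝ) (hS : S.IsSymm)
    (htr : h.trace = 0) (w : Fin 2 → ℝ) :
    -(S.trace) * (∑ i : Fin 2, w i * h.mulVec w i) -
        (∑ i : Fin 2, ∑ j : Fin 2, (S i j) ^ 2) -
        (∑ i : Fin 2, (w i) ^ 2) * (h * S).trace ≤
      (1 / 2 : ℝ) * (∑ i : Fin 2, w i * h.mulVec w i) ^ 2 +
        (1 / 4 : ℝ) * (∑ i : Fin 2, (w i) ^ 2) ^ 2 *
          (∑ i : Fin 2, ∑ j : Fin 2, (h i j) ^ 2) := by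
  set q := ∑ i, w i * h.mulVec w i
  set U := ∑ i, w i ^ 2
  have hnorm := S.sum_sq_eq_sum_sq_tracelessPart_add
  rw [Fintype.card_fin, Nat.cast_ofNat] at hnorm
  have hpair : (h * S).trace = ∑ i, ∑ j, S.tracelessPart i j * h i j := by
    rw [trace_mul_eq_sum_mul_of_isSymm hS, sum_tracelessPart_mul_of_trace_eq_zero S htr]
  have hsq := sum_sq_add_two_mul_sum_mul_add_sq_nonneg S.tracelessPart h (U / 2)
  rw [hnorm, hpair]
  nlinarith [sq_nonneg (q + S.trace)]

/-- Completing-the-square inequality from the gradient estimate in the proof of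
Theorem 1.1: for symmetric 2×2 matrices `S`, `h` with `tr h = 0` and `w ∈ ℝ²`,
`-(tr S)·⟨w,hw⟩ - ‖S‖² - |w|²·tr(h·S) ≤ ½⟨w,hw⟩² + ¼|w|⁴‖h‖²`,
with Frobenius norms and the Euclidean inner product written as sums. -/
theorem stmt_10 (S h : Matrix (Fin 2) (Fin 2) ℝ) (hS : S.IsSymm) (hh : h.IsSymm)
    (htr : h.trace = 0) (w : Fin 2 → ℝ) :
    -(S.trace) * (∑ i : Fin 2, w i * h.mulVec w i) -
        (∑ i : Fin 2, ∑ j : Fin 2, (S i j) ^ 2) -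
        (∑ i : Fin 2, (w i) ^ 2) * (h * S).trace ≤
      (1 / 2 : ℝ) * (∑ i : Fin 2, w i * h.mulVec w i) ^ 2 +
        (1 / 4 : ℝ) * (∑ i : Fin 2, (w i) ^ 2) ^ 2 *
          (∑ i : Fin 2, ∑ j : Fin 2, (h i j) ^ 2) :=
  stmt_10_general S h hS htr w
end
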